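/- For all i > j ≥ 0 and all coefficient sequences a, b, the ψ-derivative of the opposite Fontané product satisfies D(a ⋆_{i,j} b) = (D a) (⋆_{i+1,j}⋆_{1,0}) b + a ⋆_{i+1,j+1} (D b), where ⋆_{i+1,j}⋆_{1,0} denotes the concatenated opposite product with kernel F(n+i+1, n−k+j)·F(n+1, n−k). -/

import Mathlib

/-!
With T k = F(n+1+i, n+1−k+j) aₖ b_{n+1−k}, the left side is Σₖ binomψ(n+1,k) T k, and both
products on the right are sums against the same T. The ψ-Pascal rule
binomψ(n+1,k+1) = F(n+1,n−k) binomψ(n,k) + binomψ(n,k+1) splits the former into the latter;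
the boundary terms agree because F(n+1,0) = 1 once ψ₀ = 0.
-/

open Finset

/-- The ψ-factorial: ψₙ! = ψ₁ψ₂⋯ψₙ, with ψ₀! = 1. -/
noncomputable def psiFact (ψ : ℕ → ℂ) : ℕ → ℂ
  | 0 => 1
  | n + 1 => psiFact ψ n * ψ (n + 1)

/-- The ψ-binomial coefficient binomψ(n,k) = ψₙ!/(ψₖ!·ψ_{n−k}!). -/
noncomputable def psiBinom (ψ : ℕ → ℂ) (n k : ℕ) : ℂ :=
  psiFact ψ n / (psiFact ψ k * psiFact ψ (n - k))

/-- The Fontané numbers F(n,k) = (ψₙ − ψₖ)/ψ_{n−k}. -/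
noncomputable def Fker (ψ : ℕ → ℂ) (n k : ℕ) : ℂ :=
  (ψ n - ψ k) / ψ (n - k)

/-- The opposite Fontané product ⋆_{i,j} of coefficient sequences. -/
noncomputable def oppFontane (ψ : ℕ → ℂ) (i j : ℕ) (a b : ℕ → ℂ) (n : ℕ) : ℂ :=
  ∑ k ∈ Finset.range (n + 1), Fker ψ (n + i) (n - k + j) * psiBinom ψ n k * a k * b (n - k)

/-- The concatenated opposite Fontané product ⋆_{i₁,j₁}⋆_{i₂,j₂}. -/
noncomputable def oppFontane2 (ψ : ℕ → ℂ) (i₁ j₁ i₂ j₂ : ℕ) (a b : ℕ → ℂ) (n : ℕ) : ℂ :=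
  ∑ k ∈ Finset.range (n + 1),
    Fker ψ (n + i₁) (n - k + j₁) * Fker ψ (n + i₂) (n - k + j₂) * psiBinom ψ n k * a k * b (n - k)

/-- The ψ-derivative on coefficient sequences: the shift (D a)ₙ = a_{n+1}. -/
def Dpsi (a : ℕ → ℂ) (n : ℕ) : ℂ := a (n + 1)

lemma psiFact_ne_zero {ψ : ℕ → ℂ} (hψ : ∀ n : ℕ, 1 ≤ n → ψ n ≠ 0) (n : ℕ) :
    psiFact ψ n ≠ 0 := by
  induction n with
  | zero => exact one_ne_zero
  | succ m ih => exact mul_ne_zero ih (hψ (m + 1) m.succ_pos)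

lemma psiBinom_zero_right {ψ : ℕ → ℂ} (hψ : ∀ n : ℕ, 1 ≤ n → ψ n ≠ 0) (n : ℕ) :
    psiBinom ψ n 0 = 1 := by
  simp [psiBinom, psiFact, psiFact_ne_zero hψ n]

lemma psiBinom_self {ψ : ℕ → ℂ} (hψ : ∀ n : ℕ, 1 ≤ n → ψ n ≠ 0) (n : ℕ) :
    psiBinom ψ n n = 1 := by
  simp [psiBinom, psiFact, psiFact_ne_zero hψ n]

lemma Fker_zero_right {ψ : ℕ → ℂ} (hψ0 : ψ 0 = 0) {n : ℕ} (hn : ψ n ≠ 0) :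
    Fker ψ n 0 = 1 := by
  simp [Fker, hψ0, hn]

lemma psiBinom_succ_succ {ψ : ℕ → ℂ} (hψ : ∀ n : ℕ, 1 ≤ n → ψ n ≠ 0) {n k : ℕ} (hk : k < n) :
    psiBinom ψ (n + 1) (k + 1)
      = Fker ψ (n + 1) (n - k) * psiBinom ψ n k + psiBinom ψ n (k + 1) := by
  obtain ⟨m, rfl⟩ := Nat.exists_eq_add_of_lt hk
  have hsub₁ : k + m + 1 + 1 - (k + 1) = m + 1 := by omega
  have hsub₂ : k + m + 1 - k = m + 1 := by omega
  have hsub₃ : k + m + 1 - (k + 1) = m := by omega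
  have hsub₄ : k + m + 1 + 1 - (m + 1) = k + 1 := by omega
  simp only [psiBinom, Fker, hsub₁, hsub₂, hsub₃, hsub₄, psiFact]
  have := psiFact_ne_zero hψ k
  have := psiFact_ne_zero hψ m
  have := hψ (k + 1) (by omega)
  have := hψ (m + 1) (by omega)
  field_simp
  ring

lemma sum_psiBinom_succ_smul {M : Type*} [AddCommMonoid M] [Module ℂ M] {ψ : ℕ → ℂ}
    (hψ0 : ψ 0 = 0) (hψ : ∀ n : ℕ, 1 ≤ n → ψ n ≠ 0) (n : ℕ) (T : ℕ → M) :
    ∑ k ∈ range (n + 2), psiBinom ψ (n + 1) k • T k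
      = ∑ k ∈ range (n + 1), (Fker ψ (n + 1) (n - k) * psiBinom ψ n k) • T (k + 1)
        + ∑ k ∈ range (n + 1), psiBinom ψ n k • T k := by
  have hpascal : ∑ k ∈ range n, psiBinom ψ (n + 1) (k + 1) • T (k + 1)
      = ∑ k ∈ range n, (Fker ψ (n + 1) (n - k) * psiBinom ψ n k) • T (k + 1)
        + ∑ k ∈ range n, psiBinom ψ n (k + 1) • T (k + 1) := by
    rw [← sum_add_distrib]
    refine sum_congr rfl fun k hk => ?_
    rw [psiBinom_succ_succ hψ (mem_range.mp hk), add_smul]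
  have hlhs : ∑ k ∈ range (n + 2), psiBinom ψ (n + 1) k • T k
      = ∑ k ∈ range n, psiBinom ψ (n + 1) (k + 1) • T (k + 1)
        + psiBinom ψ (n + 1) (n + 1) • T (n + 1) + psiBinom ψ (n + 1) 0 • T 0 := by
    rw [sum_range_succ', sum_range_succ]
  rw [hlhs, hpascal, sum_range_succ, sum_range_succ' _ n, Nat.sub_self,
    Fker_zero_right hψ0 (hψ (n + 1) n.succ_pos), psiBinom_self hψ, psiBinom_self hψ,
    psiBinom_zero_right hψ, psiBinom_zero_right hψ, one_mul]
  abel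

theorem Dpsi_oppFontane_general (ψ : ℕ → ℂ) (hψ0 : ψ 0 = 0) (hψ : ∀ n : ℕ, 1 ≤ n → ψ n ≠ 0)
    (i j : ℕ) (a b : ℕ → ℂ) (n : ℕ) :
    Dpsi (oppFontane ψ i j a b) n
      = oppFontane2 ψ (i + 1) j 1 0 (Dpsi a) b n
        + oppFontane ψ (i + 1) (j + 1) a (Dpsi b) n := by
  set T : ℕ → ℂ := fun k => Fker ψ (n + 1 + i) (n + 1 - k + j) * a k * b (n + 1 - k)
  have hD : Dpsi (oppFontane ψ i j a b) n = ∑ k ∈ range (n + 2), psiBinom ψ (n + 1) k • T k :=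
    show oppFontane ψ i j a b (n + 1) = _ from
    sum_congr rfl fun k _ => by simp only [T, smul_eq_mul]; ring
  have hDa : oppFontane2 ψ (i + 1) j 1 0 (Dpsi a) b n
      = ∑ k ∈ range (n + 1), (Fker ψ (n + 1) (n - k) * psiBinom ψ n k) • T (k + 1) :=
    sum_congr rfl fun k _ => by
      simp only [T, Dpsi, smul_eq_mul, add_zero]
      rw [show n + 1 - (k + 1) = n - k by omega, show n + (i + 1) = n + 1 + i by omega]
      ring
  have hDb : oppFontane ψ (i + 1) (j + 1) a (Dpsi b) n
      = ∑ k ∈ range (n + 1), psiBinom ψ n k • T k :=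
    sum_congr rfl fun k hk => by
      have hkn := mem_range.mp hk
      simp only [T, Dpsi, smul_eq_mul, show n - k + 1 = n + 1 - k by omega]
      rw [show n - k + (j + 1) = n + 1 - k + j by omega, show n + (i + 1) = n + 1 + i by omega]
      ring
  rw [hD, hDa, hDb, sum_psiBinom_succ_smul hψ0 hψ]

/-- The ψ-derivative of the opposite Fontané product:
D(a ⋆_{i,j} b) = (D a) (⋆_{i+1,j}⋆_{1,0}) b + a ⋆_{i+1,j+1} (D b). -/
theorem Dpsi_oppFontane (ψ : ℕ → ℂ) (hψ0 : ψ 0 = 0) (hψ1 : ψ 1 = 1) (hψ : ∀ n : ℕ, 1 ≤ n → ψ n ≠ 0)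
    (i j : ℕ) (hij : j < i) (a b : ℕ → ℂ) (n : ℕ) :
    Dpsi (oppFontane ψ i j a b) n
      = oppFontane2 ψ (i + 1) j 1 0 (Dpsi a) b n
        + oppFontane ψ (i + 1) (j + 1) a (Dpsi b) n :=
  Dpsi_oppFontane_general ψ hψ0 hψ i j a b n
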